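/- Let A be a ring and R a central subring such that A is finitely generated as an R-module, and suppose the contraction map π : Spec A → Spec R, P ↦ P ∩ R, is injective. Then for every two-sided ideal I of A, π(V(I)) = V(I ∩ R), where V denotes the closed set of primes containing the given ideal; consequently π is a closed map and a homeomorphism onto Spec R. -/

import Mathlib

/-- A two-sided ideal `P` of a ring `A` is prime if it is proper and whenever
`a x b ∈ P` for all `x`, then `a ∈ P` or `b ∈ P`. -/
def TwoSidedIdeal.IsPrimeTS {A : Type u} [Ring A] (P : TwoSidedIdeal A) : Prop :=
  P ≠ ⊤ ∧ ∀ a b : A, (∀ x : A, a * x * b ∈ P) → a ∈ P ∨ b ∈ P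

/-- The contraction `P ∩ R` of a two-sided ideal of `A` to the central subring `R`. -/
def TwoSidedIdeal.contract {R : Type v} {A : Type u} [CommRing R] [Ring A] [Algebra R A]
    (P : TwoSidedIdeal A) : Ideal R :=
  (TwoSidedIdeal.asIdeal P).comap (algebraMap R A)

theorem TwoSidedIdeal.contract_isPrime {R : Type v} {A : Type u} [CommRing R] [Ring A]
    [Algebra R A] {P : TwoSidedIdeal A} (hP : P.IsPrimeTS) :
    (P.contract (R := R)).IsPrime := by
  constructor
  · intro h
    have h1 : (1 : R) ∈ P.contract (R := R) := (Ideal.eq_top_iff_one _).1 h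
    have h2 : (1 : A) ∈ P := by simpa [TwoSidedIdeal.contract] using h1
    exact hP.1 (P.one_mem_iff.1 h2)
  · intro x y hxy
    have hxy' : algebraMap R A x * algebraMap R A y ∈ P := by
      rw [← map_mul]
      exact hxy
    rcases hP.2 (algebraMap R A x) (algebraMap R A y) (fun z => by
      rw [show algebraMap R A x * z * algebraMap R A y
            = z * (algebraMap R A x * algebraMap R A y) by
          rw [Algebra.commutes x z, mul_assoc]]
      exact P.mul_mem_left _ _ hxy') with h | h
    · exact Or.inl h
    · exact Or.inr h

/-- The prime spectrum of a (possibly noncommutative) ring: the set of prime two-sided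
ideals. -/
def PrimeSpectrumNC (A : Type u) [Ring A] : Type u :=
  {P : TwoSidedIdeal A // P.IsPrimeTS}

/-- The closed set `V(I)` of prime two-sided ideals containing a given two-sided ideal `I`. -/
def zeroLocusNC {A : Type u} [Ring A] (I : TwoSidedIdeal A) : Set (PrimeSpectrumNC A) :=
  {P | I ≤ P.1}

/-- The Zariski topology on the noncommutative prime spectrum, generated by the complements
of the sets `V(I)`. -/
instance {A : Type u} [Ring A] : TopologicalSpace (PrimeSpectrumNC A) :=
  TopologicalSpace.generateFrom {s | ∃ I : TwoSidedIdeal A, s = (zeroLocusNC I)ᶜ}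

/-- The contraction map `π : Spec A → Spec R`. -/
def piSpec (R : Type v) {A : Type u} [CommRing R] [Ring A] [Algebra R A] :
    PrimeSpectrumNC A → PrimeSpectrum R :=
  fun P => ⟨P.1.contract, TwoSidedIdeal.contract_isPrime P.2⟩

/-! Lying over: for a prime `q ⊇ I ∩ R`, the ideal `I + qA` still meets `R` only inside `q`.
Indeed, an `x ∈ (I + qA) ∩ R` acts on the finite `R`-module `A/I` with image in `q(A/I)`,
and `q` lies in the support of `A/I` (its annihilator is `I ∩ R`), hence in that of `(A/I)/q(A/I)`,
which `x` annihilates. A two-sided ideal maximal among those containing `I + qA` and avoiding the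
monoid `R \ q` is prime and contracts to `q`; this gives `π(V(I)) = V(I ∩ R)`.
When `π` is injective, `V(I) = π⁻¹(V(I ∩ R))`, so the Zariski topology of `Spec A` is induced
by `π`; as `π` is also surjective, it is a homeomorphism. -/

namespace TwoSidedIdeal

variable {A : Type u} [Ring A]

theorem mul_mem_of_mem_span_singleton {P : TwoSidedIdeal A} {a b : A}
    (hab : ∀ x, a * x * b ∈ P) {α β : A} (hα : α ∈ span {a}) (hβ : β ∈ span {b}) :
    α * β ∈ P := by
  have ha : ∀ β ∈ span {b}, ∀ x, a * x * β ∈ P := by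
    intro β hβ
    induction hβ using span_induction with
    | mem _ h => rw [Set.mem_singleton_iff.1 h]; exact hab
    | zero => simp [P.zero_mem]
    | add _ _ _ _ hx hy => intro x; rw [mul_add]; exact P.add_mem (hx x) (hy x)
    | neg _ _ hx => intro x; rw [mul_neg]; exact P.neg_mem (hx x)
    | left_absorb c _ _ hx => intro x; rw [← mul_assoc, mul_assoc a]; exact hx _
    | right_absorb c _ _ hx => intro x; rw [← mul_assoc]; exact P.mul_mem_right _ _ (hx x)
  induction hα using span_induction generalizing β with
  | mem _ h => rw [Set.mem_singleton_iff.1 h, ← mul_one a]; exact ha β hβ 1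
  | zero => simp [P.zero_mem]
  | add _ _ _ _ hx hy => rw [add_mul]; exact P.add_mem (hx hβ) (hy hβ)
  | neg _ _ hx => rw [neg_mul]; exact P.neg_mem (hx hβ)
  | left_absorb c _ _ hx => rw [mul_assoc]; exact P.mul_mem_left _ _ (hx hβ)
  | right_absorb c _ _ hx => rw [mul_assoc]; exact hx (mul_mem_left _ _ _ hβ)

theorem isPrimeTS_of_maximally_disjoint (P : TwoSidedIdeal A) (S : Submonoid A)
    (disjoint : Disjoint (P : Set A) S)
    (maximally_disjoint : ∀ J : TwoSidedIdeal A, P < J → ¬ Disjoint (J : Set A) S) :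
    P.IsPrimeTS := by
  refine ⟨fun hP => disjoint.ne_of_mem (hP ▸ trivial) S.one_mem rfl, fun a b hab => ?_⟩
  by_contra! hP
  have meets : ∀ z ∉ P, ∃ m ∈ P, ∃ α ∈ span {z}, m + α ∈ S := by
    intro z hz
    have hlt : P < P ⊔ span {z} :=
      lt_of_le_of_ne le_sup_left fun h => hz (h ▸ mem_sup_right (subset_span rfl))
    obtain ⟨s, hs, hsS⟩ := Set.not_disjoint_iff.1 (maximally_disjoint _ hlt)
    obtain ⟨m, hm, α, hα, rfl⟩ := mem_sup.1 hs
    exact ⟨m, hm, α, hα, hsS⟩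
  obtain ⟨m, hm, α, hα, hs⟩ := meets a hP.1
  obtain ⟨m', hm', β, hβ, ht⟩ := meets b hP.2
  refine disjoint.ne_of_mem ?_ (S.mul_mem hs ht) rfl
  rw [show (m + α) * (m' + β) = m * (m' + β) + α * m' + α * β by noncomm_ring]
  exact P.add_mem (P.add_mem (P.mul_mem_right _ _ hm) (P.mul_mem_left _ _ hm'))
    (mul_mem_of_mem_span_singleton hab hα hβ)

theorem mem_sSup_of_directedOn {c : Set (TwoSidedIdeal A)} (hne : c.Nonempty)
    (hc : DirectedOn (· ≤ ·) c) {x : A} : x ∈ sSup c ↔ ∃ J ∈ c, x ∈ J := by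
  refine ⟨fun hx => ?_, fun ⟨J, hJ, hxJ⟩ => le_sSup hJ hxJ⟩
  let K : TwoSidedIdeal A := .mk' (⋃ J ∈ c, (J : Set A))
    (by obtain ⟨J, hJ⟩ := hne; exact Set.mem_biUnion hJ J.zero_mem)
    (fun {x y} hx hy => by
      obtain ⟨J, hJ, hxJ⟩ := Set.mem_iUnion₂.1 hx
      obtain ⟨J', hJ', hyJ'⟩ := Set.mem_iUnion₂.1 hy
      obtain ⟨L, hL, hJL, hJ'L⟩ := hc J hJ J' hJ'
      exact Set.mem_biUnion hL (L.add_mem (hJL hxJ) (hJ'L hyJ')))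
    (fun {x} hx => by
      obtain ⟨J, hJ, hxJ⟩ := Set.mem_iUnion₂.1 hx
      exact Set.mem_biUnion hJ (J.neg_mem hxJ))
    (fun {x y} hy => by
      obtain ⟨J, hJ, hyJ⟩ := Set.mem_iUnion₂.1 hy
      exact Set.mem_biUnion hJ (J.mul_mem_left x y hyJ))
    (fun {x y} hx => by
      obtain ⟨J, hJ, hxJ⟩ := Set.mem_iUnion₂.1 hx
      exact Set.mem_biUnion hJ (J.mul_mem_right x y hxJ))
  have hK : sSup c ≤ K := sSup_le fun J hJ y hy => by
    rw [mem_mk']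
    exact Set.mem_biUnion hJ hy
  simpa [K, mem_mk'] using hK hx

theorem exists_le_isPrimeTS_disjoint (I : TwoSidedIdeal A) (S : Submonoid A)
    (disjoint : Disjoint (I : Set A) S) :
    ∃ P : TwoSidedIdeal A, P.IsPrimeTS ∧ I ≤ P ∧ Disjoint (P : Set A) S := by
  have ⟨P, hIP, hP⟩ := zorn_le_nonempty₀ {P : TwoSidedIdeal A | Disjoint (P : Set A) S}
    (fun c hc hchain J hJ => ?_) I disjoint
  · exact ⟨P, isPrimeTS_of_maximally_disjoint _ _ hP.1 (fun _ ↦ hP.not_prop_of_gt), hIP, hP.1⟩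
  refine ⟨sSup c, Set.disjoint_left.2 fun x hx => ?_, fun _ => le_sSup⟩
  obtain ⟨J', hJ', hxJ'⟩ := (mem_sSup_of_directedOn ⟨J, hJ⟩ hchain.directedOn).1 hx
  exact Set.disjoint_left.1 (hc hJ') hxJ'

end TwoSidedIdeal

theorem Module.mem_of_forall_smul_mem_smul_top {R M : Type*} [CommRing R] [AddCommGroup M]
    [Module R M] [Module.Finite R M] {q : Ideal R} [q.IsPrime]
    (hq : Module.annihilator R M ≤ q) {x : R} (hx : ∀ m : M, x • m ∈ q • (⊤ : Submodule R M)) :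
    x ∈ q := by
  have hsupp : (⟨q, ‹_›⟩ : PrimeSpectrum R) ∈ Module.support R (M ⧸ q • (⊤ : Submodule R M)) := by
    rw [Module.support_quotient]
    exact ⟨Module.mem_support_iff_of_finite.2 hq, fun _ => id⟩
  refine Module.annihilator_le_of_mem_support hsupp (Module.mem_annihilator.2 fun m => ?_)
  obtain ⟨m, rfl⟩ := Submodule.mkQ_surjective _ m
  rw [← map_smul, Submodule.mkQ_apply, Submodule.Quotient.mk_eq_zero]
  exact hx m

theorem Submodule.map_mem_smul_top {R M N : Type*} [CommRing R] [AddCommGroup M] [Module R M]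
    [AddCommGroup N] [Module R N] (q : Ideal R) (f : M →ₗ[R] N) {m : M}
    (hm : m ∈ q • (⊤ : Submodule R M)) : f m ∈ q • (⊤ : Submodule R N) :=
  Submodule.smul_mono le_rfl le_top (Submodule.map_smul'' q ⊤ f ▸ Submodule.mem_map_of_mem hm)

section Contraction

variable {R : Type v} {A : Type u} [CommRing R] [Ring A] [Algebra R A]

@[simp]
theorem TwoSidedIdeal.mem_contract {P : TwoSidedIdeal A} {r : R} :
    r ∈ P.contract ↔ algebraMap R A r ∈ P :=
  TwoSidedIdeal.mem_asIdeal

theorem TwoSidedIdeal.mem_smul_top_of_mem_span_algebraMap_image (q : Ideal R) {z : A}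
    (hz : z ∈ span (algebraMap R A '' q)) : z ∈ q • (⊤ : Submodule R A) := by
  induction hz using span_induction with
  | mem _ h =>
    obtain ⟨r, hr, rfl⟩ := h
    rw [Algebra.algebraMap_eq_smul_one]
    exact Submodule.smul_mem_smul hr trivial
  | zero => exact Submodule.zero_mem _
  | add _ _ _ _ hx hy => exact Submodule.add_mem _ hx hy
  | neg _ _ hx => exact Submodule.neg_mem _ hx
  | left_absorb c _ _ hx => exact Submodule.map_mem_smul_top q (LinearMap.mulLeft R c) hx
  | right_absorb c _ _ hx => exact Submodule.map_mem_smul_top q (LinearMap.mulRight R c) hx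

theorem TwoSidedIdeal.contract_sup_span_le [Module.Finite R A] (I : TwoSidedIdeal A)
    (q : Ideal R) [q.IsPrime] (hIq : I.contract ≤ q) :
    (I ⊔ span (algebraMap R A '' q)).contract ≤ q := by
  let N : Submodule R A := I.asIdeal.restrictScalars R
  have hN : ∀ {a : A}, Submodule.Quotient.mk (p := N) a = 0 ↔ a ∈ I := by
    intro a
    rw [Submodule.Quotient.mk_eq_zero]
    exact TwoSidedIdeal.mem_asIdeal
  intro x hx
  obtain ⟨i, hi, z, hz, hiz⟩ := mem_sup.1 (mem_contract.1 hx)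
  refine Module.mem_of_forall_smul_mem_smul_top (M := A ⧸ N) (fun r hr => hIq ?_) (fun m => ?_)
  · rw [mem_contract, ← hN, Algebra.algebraMap_eq_smul_one, Submodule.Quotient.mk_smul]
    exact Module.mem_annihilator.1 hr _
  · obtain ⟨a, rfl⟩ := Submodule.mkQ_surjective _ m
    have hxa : x • a = a * i + a * z := by
      rw [Algebra.smul_def, Algebra.commutes, ← hiz, mul_add]
    rw [← map_smul, hxa, map_add, Submodule.mkQ_apply, hN.2 (I.mul_mem_left a i hi), zero_add]
    exact Submodule.map_mem_smul_top q (N.mkQ ∘ₗ LinearMap.mulLeft R a)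
      (mem_smul_top_of_mem_span_algebraMap_image q hz)

theorem TwoSidedIdeal.disjoint_map_primeCompl_iff (J : TwoSidedIdeal A) (q : Ideal R)
    [q.IsPrime] :
    Disjoint (J : Set A) (q.primeCompl.map (algebraMap R A)) ↔ J.contract ≤ q := by
  simp only [Set.disjoint_left, Submonoid.coe_map, Set.mem_image, SetLike.mem_coe,
    Ideal.mem_primeCompl_iff, not_exists, not_and, SetLike.le_def, mem_contract]
  exact ⟨fun h r hr => not_not.1 fun hrq => h hr r hrq rfl,
    fun h a ha r hrq hra => hrq (h (hra ▸ ha))⟩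

theorem TwoSidedIdeal.exists_isPrimeTS_contract_eq [Module.Finite R A] (I : TwoSidedIdeal A)
    (q : Ideal R) [q.IsPrime] (hIq : I.contract ≤ q) :
    ∃ P : TwoSidedIdeal A, P.IsPrimeTS ∧ I ≤ P ∧ P.contract = q := by
  set J := I ⊔ span (algebraMap R A '' q)
  obtain ⟨P, hP, hJP, hPq⟩ := exists_le_isPrimeTS_disjoint J (q.primeCompl.map (algebraMap R A))
    ((disjoint_map_primeCompl_iff J q).2 (contract_sup_span_le I q hIq))
  refine ⟨P, hP, le_sup_left.trans hJP, le_antisymm ((disjoint_map_primeCompl_iff P q).1 hPq) ?_⟩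
  exact fun r hr => mem_contract.2 (hJP (mem_sup_right (subset_span ⟨r, hr, rfl⟩)))

theorem image_piSpec_zeroLocusNC [Module.Finite R A] (I : TwoSidedIdeal A) :
    piSpec R '' zeroLocusNC I = PrimeSpectrum.zeroLocus (I.contract (R := R) : Set R) := by
  ext q
  constructor
  · rintro ⟨P, hIP, rfl⟩ r hr
    exact TwoSidedIdeal.mem_contract.2 (hIP (TwoSidedIdeal.mem_contract.1 hr))
  · intro hq
    obtain ⟨P, hP, hIP, hPq⟩ := I.exists_isPrimeTS_contract_eq q.asIdeal hq
    exact ⟨⟨P, hP⟩, hIP, PrimeSpectrum.ext hPq⟩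

theorem preimage_piSpec_zeroLocus (s : Set R) :
    piSpec R (A := A) ⁻¹' PrimeSpectrum.zeroLocus s
      = zeroLocusNC (TwoSidedIdeal.span (algebraMap R A '' s)) := by
  ext P
  simp only [Set.mem_preimage, PrimeSpectrum.mem_zeroLocus, zeroLocusNC, Set.mem_ofPred_eq,
    TwoSidedIdeal.span_le, Set.image_subset_iff]
  rfl

theorem isClosed_zeroLocusNC (I : TwoSidedIdeal A) : IsClosed (zeroLocusNC I) :=
  isOpen_compl_iff.1 (TopologicalSpace.GenerateOpen.basic _ ⟨I, rfl⟩)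

theorem continuous_piSpec : Continuous (piSpec R (A := A)) := by
  refine continuous_iff_isClosed.2 fun C hC => ?_
  obtain ⟨s, rfl⟩ := (PrimeSpectrum.isClosed_iff_zeroLocus C).1 hC
  rw [preimage_piSpec_zeroLocus]
  exact isClosed_zeroLocusNC _

theorem isInducing_piSpec [Module.Finite R A] (hπ : Function.Injective (piSpec R (A := A))) :
    Topology.IsInducing (piSpec R (A := A)) := by
  refine ⟨le_antisymm (continuous_iff_le_induced.1 continuous_piSpec) (le_generateFrom ?_)⟩
  rintro _ ⟨I, rfl⟩
  rw [← hπ.preimage_image (zeroLocusNC I), image_piSpec_zeroLocusNC, ← Set.preimage_compl]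
  exact isOpen_induced (PrimeSpectrum.isClosed_zeroLocus _).isOpen_compl

theorem piSpec_surjective [Module.Finite R A] (hinj : Function.Injective (algebraMap R A)) :
    Function.Surjective (piSpec R (A := A)) := by
  intro q
  have hq : q ∈ piSpec R '' zeroLocusNC (⊥ : TwoSidedIdeal A) := by
    rw [image_piSpec_zeroLocusNC]
    intro r hr
    rw [(injective_iff_map_eq_zero _).1 hinj r
      ((TwoSidedIdeal.mem_bot A).1 (TwoSidedIdeal.mem_contract.1 hr))]
    exact q.asIdeal.zero_mem
  obtain ⟨P, -, hP⟩ := hq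
  exact ⟨P, hP⟩

end Contraction

/-- Let `R` be a central subring of `A` with `A` a finitely generated `R`-module, and suppose
the contraction map `π : Spec A → Spec R`, `P ↦ P ∩ R`, is injective. Then for every two-sided
ideal `I` of `A` we have `π(V(I)) = V(I ∩ R)`; consequently `π` is a closed map and a
homeomorphism onto `Spec R`. -/
theorem stmt7 {R : Type v} {A : Type u} [CommRing R] [Ring A] [Algebra R A]
    (hinj : Function.Injective (algebraMap R A))
    [Module.Finite R A]
    (hπinj : Function.Injective (piSpec R (A := A))) :
    (∀ I : TwoSidedIdeal A,
      piSpec R '' zeroLocusNC I = PrimeSpectrum.zeroLocus (I.contract (R := R) : Set R)) ∧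
    IsClosedMap (piSpec R (A := A)) ∧ IsHomeomorph (piSpec R (A := A)) := by
  have hπ : IsHomeomorph (piSpec R (A := A)) := isHomeomorph_iff_isEmbedding_surjective.2
    ⟨⟨isInducing_piSpec hπinj, hπinj⟩, piSpec_surjective hinj⟩
  exact ⟨image_piSpec_zeroLocusNC, hπ.isClosedMap, hπ⟩
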